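/- arXiv:2412.05129 — 8 statements merged into one kernel-verified Lean document; each statement's English description precedes it below -/
import Mathlib

section
/- Let Z = X + iY be a symmetric 3×3 complex matrix whose imaginary part Y is positive definite. Then |det Z_j| ≥ det Y_j for j = 1, 2, where Z_j (resp. Y_j) denotes the upper-left j×j corner of Z (resp. Y). -/
/-!
Write `Z = X + iY` with `X, Y` real symmetric and factor `Y = Bᴴ B` with `B` invertible. Then
`Z = Bᴴ (A + i) B` for the Hermitian matrix `A = B⁻ᴴ X B⁻¹`, so
`|det Z| = det Y · |det (A + i)| = det Y · ∏ₖ |λₖ + i| ≥ det Y`, where `λₖ` are the (real)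
eigenvalues of `A`. Corners of `Z` are again symmetric with positive definite imaginary part.
-/

namespace Matrix

open Complex
open scoped ComplexOrder MatrixOrder

variable {n : Type*} [Fintype n] [DecidableEq n]

theorem PosDef.exists_isUnit_eq_star_mul_self {𝕜 : Type*} [RCLike 𝕜] {M : Matrix n n 𝕜}
    (hM : M.PosDef) : ∃ B : Matrix n n 𝕜, IsUnit B ∧ M = star B * B := by
  obtain ⟨B, rfl⟩ := CStarAlgebra.nonneg_iff_eq_star_mul_self.mp hM.posSemidef.nonneg
  refine ⟨B, ?_, rfl⟩
  have := (isUnit_iff_isUnit_det _).mp hM.isUnit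
  rw [det_mul] at this
  exact (isUnit_iff_isUnit_det B).mpr (isUnit_of_mul_isUnit_right this)

theorem IsHermitian.abs_im_pow_card_le_norm_det_scalar_sub {A : Matrix n n ℂ}
    (hA : A.IsHermitian) (t : ℂ) : |t.im| ^ Fintype.card n ≤ ‖(scalar n t - A).det‖ := by
  rw [← eval_charpoly, hA.charpoly_eq, Polynomial.eval_prod, norm_prod, ← Finset.card_univ,
    ← Finset.prod_const]
  gcongr with i
  simpa using abs_im_le_norm (t - hA.eigenvalues i)

theorem IsHermitian.one_le_norm_det_add_I_smul_one {A : Matrix n n ℂ} (hA : A.IsHermitian) :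
    1 ≤ ‖(A + I • 1).det‖ := by
  simpa [add_comm, smul_one_eq_diagonal] using hA.neg.abs_im_pow_card_le_norm_det_scalar_sub I

theorem PosDef.norm_det_le_norm_det_add_I_smul {X Y : Matrix n n ℂ} (hX : X.IsHermitian)
    (hY : Y.PosDef) : ‖Y.det‖ ≤ ‖(X + I • Y).det‖ := by
  obtain ⟨B, hB, rfl⟩ := hY.exists_isUnit_eq_star_mul_self
  rw [isUnit_iff_isUnit_det] at hB
  have hBH : IsUnit Bᴴ.det := by simpa [det_conjTranspose] using hB
  have hA : ((B⁻¹)ᴴ * X * B⁻¹).IsHermitian := isHermitian_conjTranspose_mul_mul _ hX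
  have hfactor : X + I • (star B * B) = Bᴴ * ((B⁻¹)ᴴ * X * B⁻¹ + I • 1) * B := by
    rw [conjTranspose_nonsing_inv]
    simp only [Matrix.add_mul, Matrix.mul_add, Matrix.mul_assoc, nonsing_inv_mul _ hB,
      Matrix.mul_smul, Matrix.smul_mul, Matrix.mul_one, Matrix.one_mul,
      ← Matrix.mul_assoc Bᴴ, mul_nonsing_inv _ hBH, star_eq_conjTranspose]
  rw [hfactor, det_mul, det_mul, det_mul, norm_mul, norm_mul, norm_mul, star_eq_conjTranspose]
  calc ‖Bᴴ.det‖ * ‖B.det‖ = ‖Bᴴ.det‖ * 1 * ‖B.det‖ := by rw [mul_one]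
    _ ≤ _ := by gcongr; exact hA.one_le_norm_det_add_I_smul_one

theorem PosDef.map_ofReal {Y : Matrix n n ℝ} (hY : Y.PosDef) :
    (Y.map ((↑) : ℝ → ℂ)).PosDef := by
  obtain ⟨B, hB, rfl⟩ := hY.exists_isUnit_eq_star_mul_self
  have hBc : IsUnit (B.map ((↑) : ℝ → ℂ)) := by
    have := ((isUnit_iff_isUnit_det B).mp hB).map ofRealHom
    rw [RingHom.map_det] at this
    exact (isUnit_iff_isUnit_det _).mpr this
  have hmap : (star B * B).map ((↑) : ℝ → ℂ) = (B.map (↑))ᴴ * B.map (↑) := by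
    rw [← conjTranspose_map _ (fun _ ↦ (conj_ofReal _).symm)]
    exact Matrix.map_mul (f := ofRealHom)
  rw [hmap]
  exact .conjTranspose_mul_self _ (mulVec_injective_of_isUnit hBc)

theorem IsSymm.det_map_im_le_norm_det {Z : Matrix n n ℂ} (hZ : Z.IsSymm)
    (hY : (Z.map im).PosDef) : (Z.map im).det ≤ ‖Z.det‖ := by
  have hX : (Z.map re).IsHermitian := isHermitian_iff_isSymm.mpr (hZ.map re)
  have hdecomp : Z = (Z.map re).map (↑) + I • (Z.map im).map (↑) := by
    ext i j
    simp [mul_comm I, re_add_im]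
  have hdet : ((Z.map im).det : ℂ) = ((Z.map im).map (↑)).det := by
    rw [← ofRealHom_eq_coe, RingHom.map_det]
    rfl
  have := hY.map_ofReal.norm_det_le_norm_det_add_I_smul
    (hX.map _ fun _ ↦ (conj_ofReal _).symm)
  rwa [← hdecomp, ← hdet, Complex.norm_of_nonneg hY.det_pos.le] at this

end Matrix

/-- For `Z` in the Siegel upper half-space of degree 3 (symmetric with
positive definite imaginary part `Y`), one has `|det Z_j| ≥ det Y_j` for `j = 1, 2`,
where the subscript denotes the upper-left `j × j` corner. -/
theorem stmt_0 (Z : Matrix (Fin 3) (Fin 3) ℂ) (hsym : Z.IsSymm)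
    (hpd : (Z.map Complex.im).PosDef) :
    ∀ (j : ℕ) (hj : j ≤ 3), (j = 1 ∨ j = 2) →
      (((Z.map Complex.im).submatrix (Fin.castLE hj) (Fin.castLE hj)).det : ℝ) ≤
        ‖(Z.submatrix (Fin.castLE hj) (Fin.castLE hj)).det‖ := by
  intro j hj _
  exact (hsym.submatrix _).det_map_im_le_norm_det (hpd.submatrix (Fin.castLE_injective hj))
end

section
/- Let M = ((a,b),(b,c)) be a symmetric 2×2 complex matrix whose imaginary part is positive definite. Then c ≠ 0, b² − ac ≠ 0, Im(a − b²/c) > 0, and Im(c/(b² − ac)) > 0. -/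
/-! Write `Y = Im M` and `z = a - b²/c`. Clearing the denominator,
`|c|² Im z = Y[(Re c, -Re b)] + Im c · det Y`, which is positive because `Y` is positive
definite. Then `b² - ac = -c z ≠ 0` and `c / (b² - ac) = -z⁻¹`, and `w ↦ -w⁻¹` preserves
the upper half-plane. -/

open Complex Matrix

lemma Complex.im_neg_inv_pos {z : ℂ} (hz : 0 < z.im) : 0 < (-z⁻¹).im := by
  have hz0 : z ≠ 0 := fun h => by simp [h] at hz
  rw [neg_im, inv_im, neg_div, neg_neg]
  exact div_pos hz (normSq_pos.mpr hz0)

lemma Complex.normSq_mul_im_sub_sq_div (a b c : ℂ) (hc : c ≠ 0) :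
    normSq c * (a - b ^ 2 / c).im =
      ![c.re, -b.re] ⬝ᵥ (!![a.im, b.im; b.im, c.im] *ᵥ ![c.re, -b.re]) +
        c.im * (!![a.im, b.im; b.im, c.im]).det := by
  have hns : normSq c ≠ 0 := (normSq_pos.mpr hc).ne'
  rw [sub_im, div_im, det_fin_two_of]
  field_simp
  simp only [dotProduct, mulVec, Fin.sum_univ_two, of_apply, cons_val', cons_val_zero,
    cons_val_one, empty_val', cons_val_fin_one, normSq_apply, pow_two, mul_im, mul_re]
  ring

lemma Complex.im_sub_sq_div_pos (a b c : ℂ) (hc : c ≠ 0)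
    (hpd : (!![a.im, b.im; b.im, c.im]).PosDef) : 0 < (a - b ^ 2 / c).im := by
  have hquad := hpd.posSemidef.dotProduct_mulVec_nonneg ![c.re, -b.re]
  have hcoeff : 0 < c.im * (!![a.im, b.im; b.im, c.im]).det :=
    mul_pos (hpd.diag_pos (i := 1)) hpd.det_pos
  have hsum := normSq_mul_im_sub_sq_div a b c hc
  exact pos_of_mul_pos_right (hsum ▸ add_pos_of_nonneg_of_pos hquad hcoeff) (normSq_nonneg c)

/-- If `M = ((a,b),(b,c))` is a symmetric 2×2 complex matrix with
positive definite imaginary part, then `c ≠ 0`, `b² − ac ≠ 0`, `Im(a − b²/c) > 0`,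
and `Im(c/(b² − ac)) > 0`. -/
theorem stmt_2 (a b c : ℂ) (hpd : (!![a.im, b.im; b.im, c.im]).PosDef) :
    c ≠ 0 ∧ b ^ 2 - a * c ≠ 0 ∧ 0 < (a - b ^ 2 / c).im ∧ 0 < (c / (b ^ 2 - a * c)).im := by
  have hc : c ≠ 0 := fun h => by simpa [h] using hpd.diag_pos (i := 1)
  set z := a - b ^ 2 / c with hz_def
  have hz : 0 < z.im := im_sub_sq_div_pos a b c hc hpd
  have hz0 : z ≠ 0 := fun h => by simp [h] at hz
  have hdisc : b ^ 2 - a * c = -(c * z) := by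
    rw [hz_def]
    field_simp
    ring
  refine ⟨hc, hdisc ▸ neg_ne_zero.mpr (mul_ne_zero hc hz0), hz, ?_⟩
  rw [hdisc, div_neg, div_mul_cancel_left₀ hc]
  exact im_neg_inv_pos hz
end

section
/- Let M = ((a,b),(b,c)) be a symmetric 2×2 complex matrix whose imaginary part is positive definite. Then b² − ac ∉ (−∞,0], (b²−ac)/c ∉ (−∞,0], and for every s ∈ ℂ one has ((b²−ac)/c)^s = (b²−ac)^s · c^{−s}, where all powers are principal-branch powers. -/
/-!
The Schur complement `a - b²/c = -(b² - ac)/c` of `M` lies in the upper half-plane: with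
`y = Im b`, the identity `Im(b² c̄) · Im c + Im(b c̄)² = y² |c|²` and `y² < Im a · Im c` give
`Im((b² - ac) c̄) < 0`. Hence `q = (b² - ac)/c` lies in the open lower half-plane while `c` lies in
the upper one, so `arg q + arg c ∈ (-π, π)`. Then `Log (q c) = Log q + Log c`, which puts
`b² - ac = q c` in the slit plane and splits `(q c)^s = q^s c^s`.
-/

open Complex ComplexConjugate Set Real

lemma Matrix.PosDef.pos_and_sq_lt_of_fin_two {p q r : ℝ} (h : (!![p, q; q, r]).PosDef) :
    0 < r ∧ q ^ 2 < p * r := by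
  refine ⟨?_, ?_⟩
  · simpa [Matrix.mulVec, dotProduct, Fin.sum_univ_two] using
      h.dotProduct_mulVec_pos (x := ![0, 1]) (by simp)
  · simpa [Matrix.det_fin_two_of, sq] using h.det_pos

namespace Complex

lemma im_sq_sub_mul_div_neg {a b c : ℂ} (hc : 0 < c.im) (hb : b.im ^ 2 < a.im * c.im) :
    ((b ^ 2 - a * c) / c).im < 0 := by
  have hc₀ : 0 < normSq c := normSq_pos.2 fun h => by simp [h] at hc
  have key : ((b ^ 2 - a * c) * conj c).im * c.im
      = (b.im ^ 2 - a.im * c.im) * normSq c - (b * conj c).im ^ 2 := by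
    simp only [normSq_apply, mul_re, mul_im, sub_im, sub_re, conj_re, conj_im, sq]; ring
  have hnum : ((b ^ 2 - a * c) * conj c).im < 0 := by
    refine neg_of_mul_neg_left (key ▸ ?_) hc.le
    nlinarith [sq_nonneg (b * conj c).im, mul_pos (sub_pos.2 hb) hc₀]
  rw [div_eq_mul_inv, inv_def, ← mul_assoc, im_mul_ofReal]
  exact mul_neg_of_neg_of_pos hnum (inv_pos.2 hc₀)

lemma arg_add_arg_mem_Ioo_of_im_neg_of_im_nonneg {x y : ℂ} (hx : x.im < 0) (hy : 0 ≤ y.im) :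
    arg x + arg y ∈ Ioo (-π) π := by
  have := neg_pi_lt_arg x
  have := arg_le_pi y
  have := arg_neg_iff.2 hx
  have := arg_nonneg_iff.2 hy
  constructor <;> linarith

lemma mul_mem_slitPlane_of_arg_add_arg_mem_Ioo {x y : ℂ} (hx : x ≠ 0) (hy : y ≠ 0)
    (h : arg x + arg y ∈ Ioo (-π) π) : x * y ∈ slitPlane := by
  rw [mem_slitPlane_iff_arg, arg_mul hx hy (Ioo_subset_Ioc_self h)]
  exact ⟨h.2.ne, mul_ne_zero hx hy⟩

lemma mul_cpow_of_arg_add_arg_mem_Ioc {x y : ℂ} (hx : x ≠ 0) (hy : y ≠ 0)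
    (h : arg x + arg y ∈ Ioc (-π) π) (s : ℂ) : (x * y) ^ s = x ^ s * y ^ s := by
  simp only [cpow_def_of_ne_zero hx, cpow_def_of_ne_zero hy,
    cpow_def_of_ne_zero (mul_ne_zero hx hy), log_mul hx hy h, add_mul, exp_add]

end Complex

/-- If `M = ((a,b),(b,c))` is a symmetric 2×2 complex matrix with positive
definite imaginary part, then `b² − ac` and `(b²−ac)/c` lie off the cut `(−∞,0]`
(i.e. in the slit plane), and for every `s ∈ ℂ` one has
`((b²−ac)/c)^s = (b²−ac)^s · c^{−s}` for principal-branch powers. -/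
theorem stmt_3 (a b c : ℂ) (hpd : (!![a.im, b.im; b.im, c.im]).PosDef) :
    b ^ 2 - a * c ∈ Complex.slitPlane ∧ (b ^ 2 - a * c) / c ∈ Complex.slitPlane ∧
    ∀ s : ℂ, ((b ^ 2 - a * c) / c) ^ s = (b ^ 2 - a * c) ^ s * c ^ (-s) := by
  obtain ⟨hc, hb⟩ := hpd.pos_and_sq_lt_of_fin_two
  have hc₀ : c ≠ 0 := fun h => by simp [h] at hc
  have hq : ((b ^ 2 - a * c) / c).im < 0 := im_sq_sub_mul_div_neg hc hb
  have hq₀ : (b ^ 2 - a * c) / c ≠ 0 := fun h => by simp [h] at hq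
  have harg := arg_add_arg_mem_Ioo_of_im_neg_of_im_nonneg hq hc.le
  have hmul : (b ^ 2 - a * c) / c * c = b ^ 2 - a * c := div_mul_cancel₀ _ hc₀
  refine ⟨hmul ▸ mul_mem_slitPlane_of_arg_add_arg_mem_Ioo hq₀ hc₀ harg,
    mem_slitPlane_iff.2 (Or.inr hq.ne), fun s => ?_⟩
  have hsplit := mul_cpow_of_arg_add_arg_mem_Ioc hq₀ hc₀ (Ioo_subset_Ioc_self harg) s
  rw [hmul] at hsplit
  rw [hsplit, cpow_neg, mul_inv_cancel_right₀ (cpow_ne_zero_iff.2 (Or.inl hc₀))]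
end

section
/- Let Z be a symmetric 2×2 complex matrix whose imaginary part is positive definite. Then det Z ∉ [0,∞); equivalently, −det Z lies in ℂ ∖ (−∞,0]. -/
/-!
Write `Z = X + iY` with `X, Y` real symmetric. Then `Re det Z = det X - det Y` and
`Im det Z` is the mixed determinant `m(X, Y)`, the polarization of `det` on 2×2 matrices.
Since `det` is a Lorentzian quadratic form there, a matrix `X` orthogonal to the timelike `Y`
(i.e. `m(X, Y) = 0`) is spacelike: `det X ≤ 0`. This is read off the identity
`y₀₀² det X + (y₀₀ x₀₁ - x₀₀ y₀₁)² + x₀₀² det Y = x₀₀ y₀₀ m(X, Y)`.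
Hence a real `det Z` equals `det X - det Y < 0`.
-/

namespace Matrix

/-- The mixed determinant of 2×2 matrices: `det (X + t • Y) = det X + t * mixedDet X Y + t² det Y`. -/
def mixedDet {R : Type*} [CommRing R] (X Y : Matrix (Fin 2) (Fin 2) R) : R :=
  X 0 0 * Y 1 1 + Y 0 0 * X 1 1 - X 0 1 * Y 1 0 - Y 0 1 * X 1 0

theorem re_det_fin_two (Z : Matrix (Fin 2) (Fin 2) ℂ) :
    Z.det.re = (Z.map Complex.re).det - (Z.map Complex.im).det := by
  simp only [det_fin_two, map_apply, Complex.sub_re, Complex.mul_re]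
  ring

theorem im_det_fin_two (Z : Matrix (Fin 2) (Fin 2) ℂ) :
    Z.det.im = mixedDet (Z.map Complex.re) (Z.map Complex.im) := by
  simp only [det_fin_two, mixedDet, map_apply, Complex.sub_im, Complex.mul_im]
  ring

theorem det_nonpos_of_mixedDet_eq_zero {X Y : Matrix (Fin 2) (Fin 2) ℝ} (hX : X.IsSymm)
    (hY : Y.PosDef) (h : mixedDet X Y = 0) : X.det ≤ 0 := by
  have hX10 : X 1 0 = X 0 1 := hX.apply 0 1
  have hY10 : Y 1 0 = Y 0 1 := by simpa using hY.isHermitian.apply 0 1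
  have hY00 : 0 < Y 0 0 := hY.diag_pos
  have hdetY : 0 < Y.det := hY.det_pos
  have key : Y 0 0 ^ 2 * X.det + (Y 0 0 * X 0 1 - X 0 0 * Y 0 1) ^ 2 + X 0 0 ^ 2 * Y.det
      = X 0 0 * Y 0 0 * mixedDet X Y := by
    simp only [det_fin_two, mixedDet, hX10, hY10]
    ring
  rw [h, mul_zero] at key
  have : Y 0 0 ^ 2 * X.det ≤ 0 := by nlinarith [sq_nonneg (Y 0 0 * X 0 1 - X 0 0 * Y 0 1)]
  exact nonpos_of_mul_nonpos_right this (by positivity)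

theorem re_det_neg_of_im_det_eq_zero {Z : Matrix (Fin 2) (Fin 2) ℂ} (hZ : Z.IsSymm)
    (hY : (Z.map Complex.im).PosDef) (h : Z.det.im = 0) : Z.det.re < 0 := by
  have hX : (Z.map Complex.re).IsSymm := by
    rw [IsSymm, ← transpose_map, hZ.eq]
  rw [im_det_fin_two] at h
  rw [re_det_fin_two]
  linarith [det_nonpos_of_mixedDet_eq_zero hX hY h, hY.det_pos]

end Matrix

/-- If `Z` is a symmetric 2×2 complex matrix with positive definite
imaginary part, then `det Z ∉ [0,∞)`; equivalently, `−det Z` lies in `ℂ ∖ (−∞,0]`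
(the slit plane). -/
theorem stmt_4 (Z : Matrix (Fin 2) (Fin 2) ℂ) (hsym : Z.IsSymm)
    (hpd : (Z.map Complex.im).PosDef) :
    (¬ ∃ r : ℝ, 0 ≤ r ∧ Z.det = (r : ℂ)) ∧ -Z.det ∈ Complex.slitPlane := by
  have key := Matrix.re_det_neg_of_im_det_eq_zero hsym hpd
  constructor
  · rintro ⟨r, hr, hdet⟩
    have := key (by simp [hdet])
    simp only [hdet, Complex.ofReal_re] at this
    linarith
  · rw [Complex.mem_slitPlane_iff, Complex.neg_re, Complex.neg_im, neg_ne_zero]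
    by_cases h : Z.det.im = 0
    · exact Or.inl (neg_pos.mpr (key h))
    · exact Or.inr h
end

section
/- Let Z = ((τ₁, z₁, z₂), (z₁, τ₂, z₃), (z₂, z₃, τ₃)) be a symmetric 3×3 complex matrix whose imaginary part is positive definite. Then τ₃ ≠ 0, τ₂τ₃ − z₃² ≠ 0, the identity τ₁ − z₂²/τ₃ − (τ₃z₁ − z₂z₃)²/(τ₃(τ₂τ₃ − z₃²)) = det Z/(τ₂τ₃ − z₃²) holds, and Im(det Z/(τ₂τ₃ − z₃²)) > 0. -/
/-!
For a symmetric complex matrix `Z`, the imaginary part of the Hermitian form `v* Z v` equals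
`xᵀ (Im Z) x + yᵀ (Im Z) y` where `v = x + i y`: the contributions of `Re Z` cancel by symmetry.
So if `Im Z` is positive definite, `Im (v* Z v) > 0` for every `v ≠ 0`; in particular `Z` is
invertible. Applied to the first column `v` of `adj Z`, for which `Z v = det Z • e₀`, this gives
`Im (conj (adj Z)₀₀ · det Z) > 0`, i.e. `Im (det Z / (τ₂τ₃ − z₃²)) > 0`, since `(adj Z)₀₀ = τ₂τ₃ − z₃²`.
-/

open Complex ComplexConjugate Matrix

theorem Complex.im_div_pos_of_im_conj_mul_pos {w c : ℂ} (h : 0 < (conj c * w).im) :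
    0 < (w / c).im := by
  have hc : c ≠ 0 := by
    rintro rfl
    simp at h
  rw [div_im, ← sub_div]
  refine div_pos ?_ (normSq_pos.2 hc)
  rw [mul_im, conj_re, conj_im] at h
  linarith

namespace Matrix

variable {n : Type*} [Fintype n]

theorem im_star_dotProduct_mulVec_of_isSymm {Z : Matrix n n ℂ} (hZ : Z.IsSymm) (v : n → ℂ) :
    (star v ⬝ᵥ Z *ᵥ v).im =
      (fun i ↦ (v i).re) ⬝ᵥ Z.map im *ᵥ (fun i ↦ (v i).re) +
        (fun i ↦ (v i).im) ⬝ᵥ Z.map im *ᵥ (fun i ↦ (v i).im) := by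
  have hcross : ∑ i, ∑ j, (v i).re * (Z i j).re * (v j).im =
      ∑ i, ∑ j, (v i).im * (Z i j).re * (v j).re := by
    rw [Finset.sum_comm]
    refine Finset.sum_congr rfl fun i _ ↦ Finset.sum_congr rfl fun j _ ↦ ?_
    rw [← hZ.apply i j]
    ring
  simp only [dotProduct, mulVec, Finset.mul_sum, im_sum, ← Finset.sum_add_distrib, map_apply,
    Pi.star_apply, star_def, mul_im, mul_re, conj_re, conj_im]
  rw [← sub_eq_zero, ← Finset.sum_sub_distrib, ← sub_eq_zero.mpr hcross, ← Finset.sum_sub_distrib]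
  refine Finset.sum_congr rfl fun i _ ↦ ?_
  rw [← Finset.sum_sub_distrib, ← Finset.sum_sub_distrib]
  exact Finset.sum_congr rfl fun j _ ↦ by ring

variable {Z : Matrix n n ℂ}

theorem im_star_dotProduct_mulVec_pos (hZ : Z.IsSymm) (hpd : (Z.map im).PosDef) {v : n → ℂ}
    (hv : v ≠ 0) : 0 < (star v ⬝ᵥ Z *ᵥ v).im := by
  rw [im_star_dotProduct_mulVec_of_isSymm hZ]
  have hre := hpd.posSemidef.dotProduct_mulVec_nonneg fun i ↦ (v i).re
  have him := hpd.posSemidef.dotProduct_mulVec_nonneg fun i ↦ (v i).im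
  by_cases h : (fun i ↦ (v i).re) = 0
  · refine add_pos_of_nonneg_of_pos hre (hpd.dotProduct_mulVec_pos fun h' ↦ hv ?_)
    ext i : 1
    exact Complex.ext (congrFun h i) (congrFun h' i)
  · exact add_pos_of_pos_of_nonneg (hpd.dotProduct_mulVec_pos h) him

theorem det_ne_zero_of_posDef_im [DecidableEq n] (hZ : Z.IsSymm) (hpd : (Z.map im).PosDef) :
    Z.det ≠ 0 := by
  rw [Ne, ← exists_mulVec_eq_zero_iff]
  rintro ⟨v, hv, hZv⟩
  simpa [hZv] using im_star_dotProduct_mulVec_pos hZ hpd hv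

theorem im_det_div_adjugate_pos [DecidableEq n] (hZ : Z.IsSymm) (hpd : (Z.map im).PosDef)
    (i : n) : 0 < (Z.det / Z.adjugate i i).im := by
  set v : n → ℂ := fun j ↦ Z.adjugate j i
  have hZv : Z *ᵥ v = Pi.single i Z.det := by
    ext j
    simpa [mulVec, dotProduct, v, mul_apply, one_apply, Pi.single_apply, eq_comm] using
      congrFun (congrFun (mul_adjugate Z) j) i
  have hv : v ≠ 0 := fun h ↦ det_ne_zero_of_posDef_im hZ hpd <| by
    simpa [h] using (congrFun hZv i).symm
  have hpos := im_star_dotProduct_mulVec_pos hZ hpd hv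
  rw [hZv, dotProduct_single] at hpos
  exact Complex.im_div_pos_of_im_conj_mul_pos hpos

end Matrix

/-- For `Z = ((τ₁,z₁,z₂),(z₁,τ₂,z₃),(z₂,z₃,τ₃))` in the Siegel upper
half-space of degree 3: `τ₃ ≠ 0`, `τ₂τ₃ − z₃² ≠ 0`,
`τ₁ − z₂²/τ₃ − (τ₃z₁ − z₂z₃)²/(τ₃(τ₂τ₃ − z₃²)) = det Z/(τ₂τ₃ − z₃²)`, and
`Im(det Z/(τ₂τ₃ − z₃²)) > 0`. -/
theorem stmt_5 (τ₁ z₁ z₂ τ₂ z₃ τ₃ : ℂ)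
    (hpd : ((!![τ₁, z₁, z₂; z₁, τ₂, z₃; z₂, z₃, τ₃]).map Complex.im).PosDef) :
    τ₃ ≠ 0 ∧ τ₂ * τ₃ - z₃ ^ 2 ≠ 0 ∧
    τ₁ - z₂ ^ 2 / τ₃ - (τ₃ * z₁ - z₂ * z₃) ^ 2 / (τ₃ * (τ₂ * τ₃ - z₃ ^ 2)) =
      (!![τ₁, z₁, z₂; z₁, τ₂, z₃; z₂, z₃, τ₃]).det / (τ₂ * τ₃ - z₃ ^ 2) ∧
    0 < ((!![τ₁, z₁, z₂; z₁, τ₂, z₃; z₂, z₃, τ₃]).det / (τ₂ * τ₃ - z₃ ^ 2)).im := by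
  set Z := !![τ₁, z₁, z₂; z₁, τ₂, z₃; z₂, z₃, τ₃]
  have hZ : Z.IsSymm := by
    ext i j
    fin_cases i <;> fin_cases j <;> rfl
  have hadj : Z.adjugate 0 0 = τ₂ * τ₃ - z₃ ^ 2 := by
    simp only [Z, adjugate_fin_three, of_apply, cons_val', cons_val_zero, cons_val_one,
      cons_val_fin_one, cons_val, sub_right_inj]
    ring
  have hpos := im_det_div_adjugate_pos hZ hpd 0
  rw [hadj] at hpos
  have hd : τ₂ * τ₃ - z₃ ^ 2 ≠ 0 := fun h ↦ by simp [h] at hpos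
  have hτ₃ : τ₃ ≠ 0 := fun h ↦ by simpa [Z, h] using hpd.diag_pos (i := 2)
  refine ⟨hτ₃, hd, ?_, hpos⟩
  simp only [Z, det_fin_three, of_apply, cons_val', cons_val_zero, cons_val_one, cons_val_two,
    empty_val', cons_val_fin_one, head_cons, tail_cons, head_fin_const]
  generalize hd_def : τ₂ * τ₃ - z₃ ^ 2 = d at hd ⊢
  rw [eq_div_iff hd]
  field_simp
  linear_combination (-τ₁ * τ₃ + z₂ ^ 2) * hd_def
end

section
/- Let ((τ₂, z₃), (z₃, τ₃)) be a symmetric 2×2 complex matrix whose imaginary part is positive definite, and let w, u ∈ ℂ with Re(w+u) > 1/2. Then ∫₀^∞ t₂^{2(w+u)−2} e^{2πiτ₂t₂²} (∫_ℝ e^{2πi(τ₃t₆² + 2z₃t₂t₆)} dt₆) dt₂ = (√π·i/2) · (2πi)^{−(w+u)} · (z₃² − τ₂τ₃)^{1/2−w−u} · τ₃^{w+u−1} · Γ(w+u−1/2), where all complex powers are principal-branch powers. -/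
/-!
The inner integral is a complex Gaussian in `t₆`: completing the square gives
`(i/(2τ₃))^{1/2} · exp(-2πi z₃² t₂² / τ₃)`, so the outer integral becomes
`∫₀^∞ t^{2s-2} e^{-b t²} dt` with `s = w + u` and `b = 2πi (z₃² - τ₂τ₃)/τ₃`.
Positive definiteness of `Im Z` is what makes `Re b > 0`. Substituting `t² ↦ t` reduces
this to `∫₀^∞ t^{a-1} e^{-bt} dt = b^{-a} Γ(a)`, which for real `b > 0` is Euler's integral and
extends to `Re b > 0` by the identity theorem. The closed form then follows by splitting principal
powers of products, legitimate because `τ₃` lies in the upper and `(z₃² - τ₂τ₃)/τ₃` in the lower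
half-plane, so no sum of arguments leaves `(-π, π]`.
-/

open MeasureTheory Set Filter Topology Complex
open scoped Real

namespace Complex

lemma mul_cpow_of_arg_add_mem_Ioc {x y : ℂ} (hx : x ≠ 0) (hy : y ≠ 0)
    (h : x.arg + y.arg ∈ Ioc (-π) π) (r : ℂ) : (x * y) ^ r = x ^ r * y ^ r := by
  rw [cpow_def_of_ne_zero (mul_ne_zero hx hy), cpow_def_of_ne_zero hx, cpow_def_of_ne_zero hy,
    log_mul hx hy h, add_mul, exp_add]

lemma arg_mem_Ioo_of_im_pos {z : ℂ} (hz : 0 < z.im) : z.arg ∈ Ioo 0 π :=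
  ⟨(arg_nonneg_iff.2 hz.le).lt_of_ne fun h ↦ hz.ne' (arg_eq_zero_iff.1 h.symm).2,
    arg_lt_pi_iff.2 (.inr hz.ne')⟩

lemma arg_mem_Ioo_of_im_neg {z : ℂ} (hz : z.im < 0) : z.arg ∈ Ioo (-π) 0 :=
  ⟨neg_pi_lt_arg z, arg_neg_iff.2 hz⟩

lemma arg_ofReal_mul_I {r : ℝ} (hr : 0 < r) : (r * I).arg = π / 2 := by
  rw [mul_comm, arg_mul_real hr, arg_I]

lemma arg_two_pi_I : (2 * π * I).arg = π / 2 := by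
  rw [show 2 * π * I = ((2 * π : ℝ) : ℂ) * I by push_cast; ring]
  exact arg_ofReal_mul_I Real.two_pi_pos

lemma arg_I_div_two : (I / 2).arg = π / 2 := by
  rw [show I / 2 = ((1 / 2 : ℝ) : ℂ) * I by push_cast; ring]
  exact arg_ofReal_mul_I one_half_pos

lemma neg_one_cpow_one_half : (-1 : ℂ) ^ (1 / 2 : ℂ) = I := by
  rw [cpow_def_of_ne_zero (by norm_num), log_neg_one,
    show (π : ℂ) * I * (1 / 2) = π / 2 * I by ring, exp_pi_div_two_mul_I]

lemma neg_pi_cpow_one_half : (-π : ℂ) ^ (1 / 2 : ℂ) = √π * I := by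
  rw [neg_eq_neg_one_mul, mul_cpow_of_arg_add_mem_Ioc (by norm_num)
      (ofReal_ne_zero.2 Real.pi_ne_zero)
      (by simp [arg_ofReal_of_nonneg Real.pi_nonneg, Real.pi_pos]),
    neg_one_cpow_one_half, show (1 / 2 : ℂ) = ((1 / 2 : ℝ) : ℂ) by norm_num,
    ← ofReal_cpow Real.pi_nonneg, Real.sqrt_eq_rpow, mul_comm]

lemma I_div_two_cpow_one_half_mul_two_pi_I_cpow_one_half :
    (I / 2) ^ (1 / 2 : ℂ) * (2 * π * I) ^ (1 / 2 : ℂ) = √π * I := by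
  rw [← mul_cpow_of_arg_add_mem_Ioc (by simp) (by simp [Real.pi_ne_zero])
      (by rw [arg_I_div_two, arg_two_pi_I]; constructor <;> linarith [Real.pi_pos]),
    show I / 2 * (2 * π * I) = -π by linear_combination (π : ℂ) * I_mul_I, neg_pi_cpow_one_half]

end Complex

lemma norm_cpow_mul_cexp_neg_mul {a b : ℂ} {t : ℝ} (ht : 0 < t) :
    ‖(t : ℂ) ^ a * cexp (-(b * t))‖ = t ^ a.re * Real.exp (-(b.re * t)) := by
  rw [norm_mul, norm_cpow_eq_rpow_re_of_pos ht, norm_exp]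
  simp

lemma integrableOn_cpow_mul_cexp_neg_mul_Ioi {a b : ℂ} (ha : 0 < a.re) (hb : 0 < b.re) :
    IntegrableOn (fun t : ℝ ↦ (t : ℂ) ^ (a - 1) * cexp (-(b * t))) (Ioi 0) := by
  refine (integrableOn_rpow_mul_exp_neg_mul_rpow (s := a.re - 1) (by linarith) one_pos hb).mono'
    (by fun_prop) ?_
  filter_upwards [ae_restrict_mem measurableSet_Ioi] with t (ht : 0 < t)
  rw [norm_cpow_mul_cexp_neg_mul ht]
  simp

lemma differentiableOn_integral_cpow_mul_cexp_neg_mul_Ioi {a : ℂ} (ha : 0 < a.re) :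
    DifferentiableOn ℂ (fun b : ℂ ↦ ∫ t in Ioi (0 : ℝ), (t : ℂ) ^ (a - 1) * cexp (-(b * t)))
      {b | 0 < b.re} := by
  intro b₀ (hb₀ : 0 < b₀.re)
  have hε : 0 < b₀.re / 2 := half_pos hb₀
  have hre : ∀ b ∈ Metric.ball b₀ (b₀.re / 2), b₀.re / 2 ≤ b.re := fun b hb ↦ by
    have := (abs_re_le_norm (b - b₀)).trans (mem_ball_iff_norm.1 hb).le
    rw [sub_re, abs_le] at this
    linarith
  refine (hasDerivAt_integral_of_dominated_loc_of_deriv_le (μ := volume.restrict (Ioi 0))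
    (F := fun b (t : ℝ) ↦ (t : ℂ) ^ (a - 1) * cexp (-(b * t)))
    (F' := fun b (t : ℝ) ↦ -((t : ℂ) ^ a * cexp (-(b * t))))
    (bound := fun t ↦ t ^ a.re * Real.exp (-(b₀.re / 2 * t)))
    (Metric.ball_mem_nhds b₀ hε) (.of_forall fun b ↦ by fun_prop)
    (integrableOn_cpow_mul_cexp_neg_mul_Ioi ha hb₀) (by fun_prop) ?_
    (integrableOn_rpow_mul_exp_neg_mul_rpow (s := a.re) (by linarith) one_pos hε |>.congr_fun
      (fun t _ ↦ by simp) measurableSet_Ioi) ?_).2.differentiableAt.differentiableWithinAt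
  · filter_upwards [ae_restrict_mem measurableSet_Ioi] with t (ht : 0 < t) b hb
    rw [norm_neg, norm_cpow_mul_cexp_neg_mul ht]
    gcongr
    nlinarith [hre b hb]
  · filter_upwards [ae_restrict_mem measurableSet_Ioi] with t (ht : 0 < t) b _
    have hpow : (t : ℂ) ^ (a - 1) * t = (t : ℂ) ^ a := by
      conv_rhs => rw [← sub_add_cancel a 1, cpow_add _ _ (ofReal_ne_zero.2 ht.ne'), cpow_one]
    exact ((hasDerivAt_mul_const (t : ℂ)).neg.cexp.const_mul ((t : ℂ) ^ (a - 1))).congr_deriv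
      (by simp only [Pi.neg_apply, ← hpow]; ring)

lemma eqOn_re_pos_of_eq_ofReal {f g : ℂ → ℂ} (hf : DifferentiableOn ℂ f {z | 0 < z.re})
    (hg : DifferentiableOn ℂ g {z | 0 < z.re}) (hfg : ∀ r : ℝ, 0 < r → f r = g r) :
    EqOn f g {z | 0 < z.re} := by
  have hopen : IsOpen {z : ℂ | 0 < z.re} := isOpen_lt continuous_const continuous_re
  have hreal : Tendsto ((↑) : ℝ → ℂ) (𝓝[≠] 1) (𝓝[≠] 1) := by
    rw [tendsto_nhdsWithin_iff]
    exact ⟨tendsto_nhdsWithin_of_tendsto_nhds continuous_ofReal.continuousAt,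
      eventually_nhdsWithin_iff.mpr (.of_forall fun t ht ↦ ofReal_ne_one.mpr ht)⟩
  refine (hf.analyticOnNhd hopen).eqOn_of_preconnected_of_frequently_eq (hg.analyticOnNhd hopen)
    (convex_halfSpace_re_gt 0).isPreconnected (z₀ := 1) (by simp) (hreal.frequently ?_)
  exact ((eventually_gt_nhds one_pos).filter_mono nhdsWithin_le_nhds |>.mono hfg).frequently

theorem integral_cpow_mul_cexp_neg_mul_Ioi_of_re_pos {a b : ℂ} (ha : 0 < a.re) (hb : 0 < b.re) :
    ∫ t in Ioi (0 : ℝ), (t : ℂ) ^ (a - 1) * cexp (-(b * t)) = b ^ (-a) * Gamma a := by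
  refine eqOn_re_pos_of_eq_ofReal (differentiableOn_integral_cpow_mul_cexp_neg_mul_Ioi ha)
    (fun b (hb : 0 < b.re) ↦ ((differentiableAt_id.cpow_const (.inl hb)).mul_const _)
      |>.differentiableWithinAt) (fun r hr ↦ ?_) hb
  rw [integral_cpow_mul_exp_neg_mul_Ioi ha hr, one_div,
    inv_cpow _ _ (by rw [arg_ofReal_of_nonneg hr.le]; exact Real.pi_ne_zero.symm), cpow_neg, id]

theorem integral_cpow_mul_cexp_neg_mul_sq_Ioi {a b : ℂ} (ha : 0 < a.re) (hb : 0 < b.re) :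
    ∫ t in Ioi (0 : ℝ), (t : ℂ) ^ (a - 1) * cexp (-(b * t ^ 2)) =
      b ^ (-(a / 2)) * Gamma (a / 2) / 2 := by
  have key := integral_comp_rpow_Ioi (fun y : ℝ ↦ (y : ℂ) ^ (a / 2 - 1) * cexp (-(b * y)))
    two_ne_zero
  rw [integral_cpow_mul_cexp_neg_mul_Ioi_of_re_pos (by simpa using ha) hb] at key
  rw [← key, ← integral_div]
  refine setIntegral_congr_fun measurableSet_Ioi fun x (hx : 0 < x) ↦ ?_
  have hx0 : (x : ℂ) ≠ 0 := ofReal_ne_zero.2 hx.ne'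
  have hsq : ((x ^ (2 : ℝ) : ℝ) : ℂ) ^ (a / 2 - 1) = (x : ℂ) ^ (a - 1) / x := by
    rw [← cpow_mul_ofReal_nonneg hx.le, show ((2 : ℝ) : ℂ) * (a / 2 - 1) = a - 1 - 1 by
      push_cast; ring, cpow_sub _ _ hx0, cpow_one]
  rw [real_smul, hsq, abs_two, show (2 : ℝ) - 1 = 1 by norm_num, Real.rpow_one, Real.rpow_two]
  push_cast
  field_simp

lemma integral_cexp_two_pi_I_mul_quadratic {τ : ℂ} (hτ : 0 < τ.im) (c : ℂ) :
    ∫ x : ℝ, cexp (2 * π * I * (τ * x ^ 2 + 2 * c * x)) =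
      (I / (2 * τ)) ^ (1 / 2 : ℂ) * cexp (-(2 * π * I * c ^ 2 / τ)) := by
  have hτ0 : τ ≠ 0 := fun h ↦ by simp [h] at hτ
  have hb : (2 * π * I * τ).re < 0 := by simpa using mul_pos Real.two_pi_pos hτ
  have := integral_cexp_quadratic hb (4 * π * I * c) 0
  simp only [add_zero, zero_sub] at this
  convert this using 3 with x
  · ring_nf
  · field_simp
    linear_combination I_mul_I
  · field_simp
    ring

lemma cexp_mul_integral_cexp_two_pi_I_mul_quadratic {τ₂ z τ₃ : ℂ} (hτ₃ : 0 < τ₃.im) (t : ℝ) :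
    cexp (2 * π * I * τ₂ * (t : ℂ) ^ 2) *
        ∫ x : ℝ, cexp (2 * π * I * (τ₃ * (x : ℂ) ^ 2 + 2 * z * t * x)) =
      (I / (2 * τ₃)) ^ (1 / 2 : ℂ) *
        cexp (-(2 * π * I * ((z ^ 2 - τ₂ * τ₃) / τ₃) * (t : ℂ) ^ 2)) := by
  have hτ₃0 : τ₃ ≠ 0 := fun h ↦ by simp [h] at hτ₃
  have hinner := integral_cexp_two_pi_I_mul_quadratic hτ₃ (z * t)
  simp only [← mul_assoc] at hinner
  rw [hinner, mul_left_comm, ← exp_add]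
  congr 2
  field_simp
  ring

lemma im_pos_and_sq_im_lt_of_posDef {τ₂ z τ₃ : ℂ} (h : (!![τ₂, z; z, τ₃].map im).PosDef) :
    0 < τ₃.im ∧ z.im ^ 2 < τ₂.im * τ₃.im := by
  have hdet := h.det_pos
  rw [Matrix.det_fin_two] at hdet
  exact ⟨by simpa using h.diag_pos (i := 1), by simpa [sq, Matrix.det_fin_two] using h.det_pos⟩

lemma im_div_neg_of_sq_im_lt {τ₂ z τ₃ : ℂ} (hτ₃ : 0 < τ₃.im) (hdet : z.im ^ 2 < τ₂.im * τ₃.im) :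
    ((z ^ 2 - τ₂ * τ₃) / τ₃).im < 0 := by
  have hτ₃0 : τ₃ ≠ 0 := fun h ↦ by simp [h] at hτ₃
  rw [div_im, ← sub_div, div_neg_iff]
  refine .inr ⟨?_, normSq_pos.2 hτ₃0⟩
  simp only [sub_im, sub_re, mul_im, mul_re, pow_two]
  nlinarith [sq_nonneg (τ₃.im * z.re - z.im * τ₃.re), mul_pos (sub_pos.2 hdet)
    (add_pos_of_nonneg_of_pos (sq_nonneg τ₃.re) (pow_pos hτ₃ 2))]

lemma I_div_two_mul_cpow_one_half_mul_two_pi_I_mul_div_cpow {τ D s : ℂ} (hτ : 0 < τ.im)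
    (hD : (D / τ).im < 0) :
    (I / (2 * τ)) ^ (1 / 2 : ℂ) * (2 * π * I * (D / τ)) ^ (1 / 2 - s) =
      √π * I * (2 * π * I) ^ (-s) * D ^ (1 / 2 - s) * τ ^ (s - 1) := by
  have hτ0 : τ ≠ 0 := fun h ↦ by simp [h] at hτ
  have hDτ0 : D / τ ≠ 0 := fun h ↦ by simp [h] at hD
  have h2πI0 : 2 * π * I ≠ 0 := by simp [Real.pi_ne_zero]
  obtain ⟨hτ₁, hτ₂⟩ := arg_mem_Ioo_of_im_pos hτ
  obtain ⟨hDτ₁, hDτ₂⟩ := arg_mem_Ioo_of_im_neg hD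
  obtain ⟨hτi₁, hτi₂⟩ := arg_mem_Ioo_of_im_neg (z := τ⁻¹)
    (by rw [inv_im]; exact div_neg_of_neg_of_pos (neg_neg_of_pos hτ) (normSq_pos.2 hτ0))
  have hprefactor :
      (I / (2 * τ)) ^ (1 / 2 : ℂ) = (I / 2) ^ (1 / 2 : ℂ) * (τ ^ (1 / 2 : ℂ))⁻¹ := by
    rw [div_mul_eq_div_div, div_eq_mul_inv (I / 2), mul_cpow_of_arg_add_mem_Ioc (by simp)
      (inv_ne_zero hτ0) (by rw [arg_I_div_two]; constructor <;> linarith), inv_cpow _ _ hτ₂.ne]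
  have hτpow : τ ^ (1 / 2 - s) * τ ^ (s - 1) = (τ ^ (1 / 2 : ℂ))⁻¹ := by
    rw [← cpow_add _ _ hτ0, ← cpow_neg]
    ring_nf
  have hDpow : D ^ (1 / 2 - s) = (D / τ) ^ (1 / 2 - s) * τ ^ (1 / 2 - s) := by
    rw [← mul_cpow_of_arg_add_mem_Ioc hDτ0 hτ0 (by constructor <;> linarith), div_mul_cancel₀ D hτ0]
  rw [hprefactor, hDpow,
    mul_cpow_of_arg_add_mem_Ioc h2πI0 hDτ0 (by rw [arg_two_pi_I]; constructor <;> linarith),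
    sub_eq_add_neg (1 / 2 : ℂ) s, cpow_add _ _ h2πI0]
  linear_combination ((τ ^ (1 / 2 : ℂ))⁻¹ * (2 * π * I) ^ (-s) * (D / τ) ^ (1 / 2 + -s)) *
      I_div_two_cpow_one_half_mul_two_pi_I_cpow_one_half -
    (√π * I * (2 * π * I) ^ (-s) * (D / τ) ^ (1 / 2 + -s)) * hτpow

/-- For `((τ₂,z₃),(z₃,τ₃)) ∈ H₂` and `Re(w+u) > 1/2`:
`∫₀^∞ t₂^{2(w+u)−2} e^{2πiτ₂t₂²} (∫_ℝ e^{2πi(τ₃t₆² + 2z₃t₂t₆)} dt₆) dt₂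
  = (√π·i/2)·(2πi)^{−(w+u)}·(z₃²−τ₂τ₃)^{1/2−w−u}·τ₃^{w+u−1}·Γ(w+u−1/2)`. -/
theorem stmt_8 (τ₂ z₃ τ₃ w u : ℂ)
    (hpd : ((!![τ₂, z₃; z₃, τ₃]).map Complex.im).PosDef)
    (h : 1 / 2 < (w + u).re) :
    ∫ t₂ in Ioi (0 : ℝ),
        (t₂ : ℂ) ^ (2 * (w + u) - 2) *
          Complex.exp (2 * (Real.pi : ℂ) * Complex.I * τ₂ * (t₂ : ℂ) ^ 2) *
          ∫ t₆ : ℝ, Complex.exp (2 * (Real.pi : ℂ) * Complex.I *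
            (τ₃ * (t₆ : ℂ) ^ 2 + 2 * z₃ * (t₂ : ℂ) * (t₆ : ℂ))) =
      (Real.sqrt Real.pi : ℂ) * Complex.I / 2 *
        (2 * (Real.pi : ℂ) * Complex.I) ^ (-(w + u)) *
        (z₃ ^ 2 - τ₂ * τ₃) ^ (1 / 2 - w - u) * τ₃ ^ (w + u - 1) *
        Complex.Gamma (w + u - 1 / 2) := by
  obtain ⟨hτ₃, hdet⟩ := im_pos_and_sq_im_lt_of_posDef hpd
  have hX := im_div_neg_of_sq_im_lt hτ₃ hdet
  have ha : 0 < (2 * (w + u) - 1).re := by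
    linarith [show (2 * (w + u) - 1).re = 2 * (w + u).re - 1 by simp]
  have hb : 0 < (2 * π * I * ((z₃ ^ 2 - τ₂ * τ₃) / τ₃)).re := by
    simpa using mul_neg_of_pos_of_neg Real.two_pi_pos hX
  rw [setIntegral_congr_fun measurableSet_Ioi fun t _ ↦ by
      rw [mul_assoc, cexp_mul_integral_cexp_two_pi_I_mul_quadratic hτ₃, mul_left_comm,
        show 2 * (w + u) - 2 = (2 * (w + u) - 1) - 1 by ring],
    integral_const_mul, integral_cpow_mul_cexp_neg_mul_sq_Ioi ha hb,
    show -((2 * (w + u) - 1) / 2) = 1 / 2 - (w + u) by ring,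
    show (2 * (w + u) - 1) / 2 = w + u - 1 / 2 by ring,
    show (1 : ℂ) / 2 - w - u = 1 / 2 - (w + u) by ring]
  linear_combination (Gamma (w + u - 1 / 2) / 2) *
    I_div_two_mul_cpow_one_half_mul_two_pi_I_mul_div_cpow (s := w + u) hτ₃ hX
end

section
/- Fix k ∈ ℝ. Consider the following three bijections of ℂ³: w : (s, t, u) ↦ (t, s, k − s − t − u); a : (s, t, u) ↦ (s + t − 1/2, 1 − t, t + u − 1/2); c : (s, t, u) ↦ (1 − t, 1 − s, s + t + u − 1). The subgroup of the group of bijections of ℂ³ (under composition) generated by {w, a, c} is isomorphic to the dihedral group of order 12. -/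
/-!
Both `w` and `a` are involutions, and on the first two coordinates their product `w * a` acts
as `(s, t) ↦ (1 - t, s + t - 1/2)`, which has order 6 (the orbit of the origin has six points);
moreover `c = w * (w * a) ^ 3` is redundant. Two involutions `σ, τ` whose product `ρ = σ * τ` has
order `n > 2` generate a copy of `DihedralGroup n`: the dihedral relations give a homomorphism
onto `⟨σ, ρ⟩ = ⟨σ, τ⟩`, and it is injective because `σ` is not a power of `ρ` (otherwise `σ`
would commute with `ρ`, and `ρ * σ = σ * ρ⁻¹` would force `ρ ^ 2 = 1`).
-/

namespace DihedralGroup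

section Lift

variable {n : ℕ} [NeZero n] {G : Type*} [Group G] {σ ρ : G}

private lemma pow_val_add (hρ : ρ ^ n = 1) (i j : ZMod n) :
    ρ ^ (i + j).val = ρ ^ i.val * ρ ^ j.val := by
  rw [ZMod.val_add, ← pow_eq_pow_mod _ hρ, pow_add]

private lemma pow_val_sub (hρ : ρ ^ n = 1) (i j : ZMod n) :
    ρ ^ (j - i).val = (ρ ^ i.val)⁻¹ * ρ ^ j.val := by
  rw [eq_inv_mul_iff_mul_eq, ← pow_val_add hρ, add_sub_cancel]

private lemma pow_mul_eq_mul_inv_pow (hρσ : ρ * σ = σ * ρ⁻¹) (m : ℕ) :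
    ρ ^ m * σ = σ * (ρ ^ m)⁻¹ := by
  induction m with
  | zero => simp
  | succ m ih =>
    rw [pow_succ, mul_assoc, hρσ, ← mul_assoc, ih, mul_assoc, ← mul_inv_rev, pow_mul_comm']

def lift (hσ : σ * σ = 1) (hρ : ρ ^ n = 1) (hρσ : ρ * σ = σ * ρ⁻¹) : DihedralGroup n →* G where
  toFun
    | .r i => ρ ^ i.val
    | .sr i => σ * ρ ^ i.val
  map_one' := by simp [← r_zero]
  map_mul' := by
    rintro (i | i) (j | j)
    · exact pow_val_add hρ i j
    · change σ * ρ ^ (j - i).val = ρ ^ i.val * (σ * ρ ^ j.val)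
      rw [pow_val_sub hρ, ← mul_assoc, ← mul_assoc, ← pow_mul_eq_mul_inv_pow hρσ]
    · change σ * ρ ^ (i + j).val = σ * ρ ^ i.val * ρ ^ j.val
      rw [pow_val_add hρ, mul_assoc]
    · change ρ ^ (j - i).val = σ * ρ ^ i.val * (σ * ρ ^ j.val)
      rw [pow_val_sub hρ, mul_assoc, ← mul_assoc (ρ ^ i.val), pow_mul_eq_mul_inv_pow hρσ,
        ← mul_assoc, ← mul_assoc, hσ, one_mul]

variable (hσ : σ * σ = 1) (hρ : ρ ^ n = 1) (hρσ : ρ * σ = σ * ρ⁻¹)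

@[simp]
lemma lift_r (i : ZMod n) : lift hσ hρ hρσ (r i) = ρ ^ i.val := rfl

@[simp]
lemma lift_sr (i : ZMod n) : lift hσ hρ hρσ (sr i) = σ * ρ ^ i.val := rfl

lemma lift_injective (hn : orderOf ρ = n) (hσ_notMem : σ ∉ Subgroup.zpowers ρ) :
    Function.Injective (lift hσ hρ hρσ) := by
  rw [injective_iff_map_eq_one]
  rintro (i | i) h
  · have hdvd : n ∣ i.val := hn.symm.dvd.trans (orderOf_dvd_of_pow_eq_one h)
    rw [(ZMod.val_eq_zero i).mp (Nat.eq_zero_of_dvd_of_lt hdvd (ZMod.val_lt i)), r_zero]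
  · exact absurd (Subgroup.mem_zpowers_iff.mpr ⟨-(i.val : ℤ), by
      rw [zpow_neg, zpow_natCast, eq_comm, ← mul_eq_one_iff_eq_inv]; exact h⟩) hσ_notMem

lemma range_lift : (lift hσ hρ hρσ).range = Subgroup.closure {σ, ρ} := by
  apply le_antisymm
  · rintro _ ⟨i | i, rfl⟩
    · exact pow_mem (Subgroup.subset_closure (by simp)) _
    · exact mul_mem (Subgroup.subset_closure (by simp))
        (pow_mem (Subgroup.subset_closure (by simp)) _)
  · rw [Subgroup.closure_le, Set.insert_subset_iff, Set.singleton_subset_iff]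
    refine ⟨⟨sr 0, by simp⟩, ⟨r 1, ?_⟩⟩
    rw [lift_r, ZMod.val_one_eq_one_mod, ← pow_eq_pow_mod _ hρ, pow_one]

end Lift

variable {n : ℕ} {G : Type*} [Group G] {σ τ : G}

lemma mul_mul_eq_mul_inv_of_mul_self_eq_one (hσ : σ * σ = 1) (hτ : τ * τ = 1) :
    σ * τ * σ = σ * (σ * τ)⁻¹ := by
  rw [mul_inv_rev, inv_eq_of_mul_eq_one_right hσ, inv_eq_of_mul_eq_one_right hτ, mul_assoc]

lemma notMem_zpowers_of_two_lt_orderOf {ρ : G} (hρσ : ρ * σ = σ * ρ⁻¹) (h2 : 2 < orderOf ρ) :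
    σ ∉ Subgroup.zpowers ρ := by
  rintro ⟨k, rfl⟩
  have hsq : ρ ^ 2 = 1 := by
    rw [sq, mul_eq_one_iff_eq_inv]
    exact mul_left_cancel ((Commute.self_zpow ρ k).eq.symm.trans hρσ)
  exact absurd (orderOf_le_of_pow_eq_one two_pos hsq) (not_le.mpr h2)

lemma closure_pair_mul_right (σ τ : G) :
    Subgroup.closure {σ, σ * τ} = Subgroup.closure {σ, τ} := by
  have hσ {S : Set G} : σ ∈ Subgroup.closure (insert σ S) :=
    Subgroup.subset_closure (Set.mem_insert σ S)
  have hsnd {x : G} : x ∈ Subgroup.closure {σ, x} :=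
    Subgroup.subset_closure (Set.mem_insert_of_mem σ rfl)
  apply le_antisymm <;>
    rw [Subgroup.closure_le, Set.insert_subset_iff, Set.singleton_subset_iff]
  · exact ⟨hσ, mul_mem hσ hsnd⟩
  · exact ⟨hσ, by simpa using mul_mem (inv_mem hσ) (hsnd (x := σ * τ))⟩

theorem nonempty_closure_mulEquiv_of_mul_self_eq_one (hσ : σ * σ = 1) (hτ : τ * τ = 1)
    (hn : orderOf (σ * τ) = n) (h2 : 2 < n) :
    Nonempty (Subgroup.closure {σ, τ} ≃* DihedralGroup n) := by
  have : NeZero n := ⟨by omega⟩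
  have hρσ := mul_mul_eq_mul_inv_of_mul_self_eq_one hσ hτ
  have hρ : (σ * τ) ^ n = 1 := hn ▸ pow_orderOf_eq_one _
  have hinj := lift_injective hσ hρ hρσ hn (notMem_zpowers_of_two_lt_orderOf hρσ (hn ▸ h2))
  rw [← closure_pair_mul_right, ← range_lift hσ hρ hρσ]
  exact ⟨(MonoidHom.ofInjective hinj).symm⟩

end DihedralGroup

namespace KoecherMaass

def w (k : ℝ) : Equiv.Perm (ℂ × ℂ × ℂ) :=
  Function.Involutive.toPerm (fun p => (p.2.1, p.1, (k : ℂ) - p.1 - p.2.1 - p.2.2))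
    fun p => by ext <;> dsimp; ring

noncomputable def a : Equiv.Perm (ℂ × ℂ × ℂ) :=
  Function.Involutive.toPerm (fun p => (p.1 + p.2.1 - 1 / 2, 1 - p.2.1, p.2.1 + p.2.2 - 1 / 2))
    fun p => by ext <;> dsimp <;> ring

def c : Equiv.Perm (ℂ × ℂ × ℂ) :=
  Function.Involutive.toPerm (fun p => (1 - p.2.1, 1 - p.1, p.1 + p.2.1 + p.2.2 - 1))
    fun p => by ext <;> dsimp <;> ring

lemma w_apply (k : ℝ) (p : ℂ × ℂ × ℂ) :
    w k p = (p.2.1, p.1, (k : ℂ) - p.1 - p.2.1 - p.2.2) := rfl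

lemma a_apply (p : ℂ × ℂ × ℂ) : a p = (p.1 + p.2.1 - 1 / 2, 1 - p.2.1, p.2.1 + p.2.2 - 1 / 2) :=
  rfl

lemma c_apply (p : ℂ × ℂ × ℂ) : c p = (1 - p.2.1, 1 - p.1, p.1 + p.2.1 + p.2.2 - 1) := rfl

lemma w_mul_self (k : ℝ) : w k * w k = 1 := Equiv.ext (w k).symm_apply_apply

lemma a_mul_self : a * a = 1 := Equiv.ext a.symm_apply_apply

lemma orderOf_w_mul_a (k : ℝ) : orderOf (w k * a) = 6 := by
  rw [orderOf_eq_iff (by norm_num)]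
  constructor
  · ext p <;> simp [pow_succ, w_apply, a_apply] <;> ring
  · intro m hm hm0 h
    have := congrArg (· (0, 0, 0)) h
    interval_cases m <;> norm_num [pow_succ, w_apply, a_apply] at this

lemma c_eq (k : ℝ) : c = w k * (w k * a) ^ 3 := by
  ext p <;> simp [pow_succ, w_apply, a_apply, c_apply] <;> ring

lemma closure_w_a_c (k : ℝ) : Subgroup.closure {w k, a, c} = Subgroup.closure {w k, a} := by
  have hw : w k ∈ Subgroup.closure {w k, a} := Subgroup.subset_closure (by simp)
  have ha : a ∈ Subgroup.closure {w k, a} := Subgroup.subset_closure (by simp)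
  refine Subgroup.closure_eq_of_le _ ?_ (Subgroup.closure_mono (by simp [Set.subset_def]))
  rw [Set.insert_subset_iff, Set.insert_subset_iff, Set.singleton_subset_iff, c_eq k]
  exact ⟨hw, ha, mul_mem hw (pow_mem (mul_mem hw ha) 3)⟩

end KoecherMaass

/-- Fix `k ∈ ℝ`. The subgroup of the group of bijections of `ℂ³`
generated by the three parameter transformations
`w : (s,t,u) ↦ (t, s, k−s−t−u)`, `a : (s,t,u) ↦ (s+t−1/2, 1−t, t+u−1/2)` and
`c : (s,t,u) ↦ (1−t, 1−s, s+t+u−1)` is isomorphic to the dihedral group of order 12. -/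
theorem stmt_12 (k : ℝ) (w a c : Equiv.Perm (ℂ × ℂ × ℂ))
    (hw : ∀ p : ℂ × ℂ × ℂ, w p = (p.2.1, p.1, (k : ℂ) - p.1 - p.2.1 - p.2.2))
    (ha : ∀ p : ℂ × ℂ × ℂ, a p = (p.1 + p.2.1 - 1 / 2, 1 - p.2.1, p.2.1 + p.2.2 - 1 / 2))
    (hc : ∀ p : ℂ × ℂ × ℂ, c p = (1 - p.2.1, 1 - p.1, p.1 + p.2.1 + p.2.2 - 1)) :
    Nonempty ((Subgroup.closure {w, a, c} : Subgroup (Equiv.Perm (ℂ × ℂ × ℂ))) ≃*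
      DihedralGroup 6) := by
  obtain rfl : w = KoecherMaass.w k := Equiv.ext hw
  obtain rfl : a = KoecherMaass.a := Equiv.ext ha
  obtain rfl : c = KoecherMaass.c := Equiv.ext hc
  rw [KoecherMaass.closure_w_a_c]
  exact DihedralGroup.nonempty_closure_mulEquiv_of_mul_self_eq_one (KoecherMaass.w_mul_self k)
    KoecherMaass.a_mul_self (KoecherMaass.orderOf_w_mul_a k) (by norm_num)
end

section
/- Let Y = ((y₁, y), (y, y₂)) be a real symmetric positive definite 2×2 matrix and let s ∈ ℂ with Re(s) > 1. Set τ_Y = y/y₁ + i·√(det Y)/y₁ ∈ ℂ. Then ∑_{v ∈ ℤ²∖{0}} (vᵀYv)^{−s} = y₁^{−s} · ∑_{(a,c) ∈ ℤ²∖{0}} |a + c·τ_Y|^{−2s}, both series converging absolutely. -/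
/-!
Completing the square gives `y₁ · vᵀYv = (y₁ a + y c)² + (det Y) c² = y₁² |a + c τ_Y|²` for
`v = (a, c)`, so each term of the Epstein series is `(y₁ · |a + c τ_Y|²)^(-s)`, and the complex
power of a product of nonnegative reals splits as `y₁^(-s) · |a + c τ_Y|^(-2s)`. Absolute
convergence comes from the Eisenstein-series bound `|a + c z| ≥ r(z) · max(|a|, |c|)` for
`z ∈ ℍ`, which dominates the terms by `‖(a, c)‖^(-2 Re s)`, summable over `ℤ²` as `2 Re s > 2`.
-/

open Complex UpperHalfPlane

lemma Matrix.PosDef.det_fin_two_pos {a b c : ℝ} (h : !![a, b; b, c].PosDef) :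
    0 < a * c - b ^ 2 := by
  simpa [Matrix.det_fin_two_of, sq] using h.det_pos

noncomputable def binaryFormTau (a b c : ℝ) : ℂ :=
  ((b / a : ℝ) : ℂ) + ((Real.sqrt (a * c - b ^ 2) / a : ℝ) : ℂ) * Complex.I

lemma binaryFormTau_im_pos {a b c : ℝ} (ha : 0 < a) (hdisc : 0 < a * c - b ^ 2) :
    0 < (binaryFormTau a b c).im := by
  simpa [binaryFormTau] using div_pos (Real.sqrt_pos.mpr hdisc) ha

lemma mul_norm_add_mul_binaryFormTau_sq {a b c : ℝ} (ha : a ≠ 0) (hdisc : 0 ≤ a * c - b ^ 2)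
    (x y : ℝ) :
    a * ‖(x : ℂ) + y * binaryFormTau a b c‖ ^ 2 = a * x ^ 2 + 2 * b * x * y + c * y ^ 2 := by
  have hsqrt : Real.sqrt (a * c - b ^ 2) ^ 2 = a * c - b ^ 2 := Real.sq_sqrt hdisc
  rw [Complex.sq_norm, Complex.normSq_apply]
  simp only [binaryFormTau, add_re, add_im, mul_re, mul_im, ofReal_re, ofReal_im, Complex.I_re,
    Complex.I_im]
  field_simp
  linear_combination y ^ 2 * hsqrt

lemma ofReal_mul_sq_cpow_neg {a r : ℝ} (ha : 0 ≤ a) (hr : 0 ≤ r) (s : ℂ) :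
    ((a * r ^ 2 : ℝ) : ℂ) ^ (-s) = (a : ℂ) ^ (-s) * (r : ℂ) ^ (-(2 * s)) := by
  rw [ofReal_mul, mul_cpow_ofReal_nonneg ha (sq_nonneg r), ← mul_neg, cpow_ofNat_mul, ofReal_pow,
    sq, sq, mul_cpow_ofReal_nonneg hr hr]

lemma summable_norm_add_mul_rpow_neg (z : ℍ) {k : ℝ} (hk : 2 < k) :
    Summable fun v : ℤ × ℤ => ‖(v.1 : ℂ) + v.2 * z‖ ^ (-k) := by
  let e : ℤ × ℤ ≃ (Fin 2 → ℤ) := (Equiv.prodComm ℤ ℤ).trans (finTwoArrowEquiv ℤ).symm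
  have hdom : Summable fun v : ℤ × ℤ => EisensteinSeries.r z ^ (-k) * ‖e v‖ ^ (-k) :=
    (e.summable_iff.mpr (EisensteinSeries.summable_one_div_norm_rpow hk)).mul_left _
  refine hdom.of_nonneg_of_le (fun _ => by positivity) fun v => ?_
  convert EisensteinSeries.summand_bound z (by linarith) (e v) using 3
  simp [e, add_comm]

lemma summable_norm_cpow_norm_add_mul (z : ℍ) {s : ℂ} (hs : 1 < s.re) :
    Summable fun v : ℤ × ℤ => ‖((‖(v.1 : ℂ) + v.2 * z‖ : ℝ) : ℂ) ^ (-(2 * s))‖ := by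
  have hre : (-(2 * s)).re < 0 := by
    simp only [neg_re, mul_re, re_ofNat, im_ofNat, zero_mul, sub_zero]
    linarith
  refine (summable_norm_add_mul_rpow_neg z (k := 2 * s.re) (by linarith)).congr fun v => ?_
  rw [norm_cpow_eq_rpow_re_of_nonneg (norm_nonneg _) hre.ne]
  simp

lemma ofReal_binaryForm_cpow_neg {a b c : ℝ} (ha : 0 < a) (hdisc : 0 ≤ a * c - b ^ 2)
    (x y : ℤ) (s : ℂ) :
    ((a * (x : ℝ) ^ 2 + 2 * b * (x : ℝ) * (y : ℝ) + c * (y : ℝ) ^ 2 : ℝ) : ℂ) ^ (-s) =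
      (a : ℂ) ^ (-s) * ((‖(x : ℂ) + y * binaryFormTau a b c‖ : ℝ) : ℂ) ^ (-(2 * s)) := by
  rw [← mul_norm_add_mul_binaryFormTau_sq ha.ne' hdisc, ofReal_mul_sq_cpow_neg ha.le (norm_nonneg _)]
  simp only [ofReal_intCast]

/-- Let `Y = ((y₁,y),(y,y₂))` be real symmetric positive definite and
`Re s > 1`. With `τ_Y = y/y₁ + i√(det Y)/y₁`, both series converge absolutely and
`∑_{v ∈ ℤ²∖{0}} (vᵀYv)^{−s} = y₁^{−s} · ∑_{(a,c) ∈ ℤ²∖{0}} |a + c·τ_Y|^{−2s}`. -/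
theorem stmt_15 (y₁ y y₂ : ℝ) (hpd : (!![y₁, y; y, y₂]).PosDef) (s : ℂ) (hs : 1 < s.re) :
    Summable (fun v : {v : ℤ × ℤ // v ≠ 0} =>
      ‖(((y₁ * (v.1.1 : ℝ) ^ 2 + 2 * y * (v.1.1 : ℝ) * (v.1.2 : ℝ) + y₂ * (v.1.2 : ℝ) ^ 2 : ℝ) :
          ℂ)) ^ (-s)‖) ∧
    Summable (fun v : {v : ℤ × ℤ // v ≠ 0} =>
      ‖((‖(v.1.1 : ℂ) + (v.1.2 : ℂ) *
            (((y / y₁ : ℝ) : ℂ) + ((Real.sqrt (y₁ * y₂ - y ^ 2) / y₁ : ℝ) : ℂ) * Complex.I)‖ :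
          ℂ)) ^ (-(2 * s))‖) ∧
    (∑' v : {v : ℤ × ℤ // v ≠ 0},
        (((y₁ * (v.1.1 : ℝ) ^ 2 + 2 * y * (v.1.1 : ℝ) * (v.1.2 : ℝ) + y₂ * (v.1.2 : ℝ) ^ 2 : ℝ) :
          ℂ)) ^ (-s)) =
      ((y₁ : ℂ)) ^ (-s) *
        ∑' v : {v : ℤ × ℤ // v ≠ 0},
          ((‖(v.1.1 : ℂ) + (v.1.2 : ℂ) *
              (((y / y₁ : ℝ) : ℂ) + ((Real.sqrt (y₁ * y₂ - y ^ 2) / y₁ : ℝ) : ℂ) * Complex.I)‖ :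
            ℂ)) ^ (-(2 * s)) := by
  have hy₁ : 0 < y₁ := by simpa using hpd.diag_pos (i := 0)
  have hdet : 0 < y₁ * y₂ - y ^ 2 := hpd.det_fin_two_pos
  let τ : ℍ := ⟨binaryFormTau y₁ y y₂, binaryFormTau_im_pos hy₁ hdet⟩
  have hterm (v : {v : ℤ × ℤ // v ≠ 0}) := ofReal_binaryForm_cpow_neg hy₁ hdet.le v.1.1 v.1.2 s
  have hsum := (summable_norm_cpow_norm_add_mul τ hs).subtype {v | v ≠ 0}
  refine ⟨(hsum.mul_left ‖(y₁ : ℂ) ^ (-s)‖).congr fun v => ?_, hsum, ?_⟩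
  · rw [hterm, norm_mul]; rfl
  · rw [← tsum_mul_left]
    exact tsum_congr hterm
end
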